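/- The local ring A = Z_3[[a_1, b_1, a_2, b_2]]/(a_1 b_1 - 3, a_2 b_2 - 3) is not a regular local ring. -/

import Mathlib

/-!
`A` has Krull dimension at most 3: since `a₁b₁ = 3 = a₂b₂`, every prime containing `a₁, b₁` and
`a₂ + b₂` contains `3, a₁, b₁, a₂, b₂`, hence the whole maximal ideal, so Krull's height theorem
applies to `(a₁, b₁, a₂ + b₂)`. On the other hand `m/m²` has dimension at least 4: sending a power
series to its first-order jet reduced mod 3, `B → 𝔽₃[ε₀, …, ε₃]/(ε)²`, kills `a₁b₁ - 3` and
`a₂b₂ - 3`, so it factors through `A`; it kills `m²` and maps `a₁, b₁, a₂, b₂` to the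
independent vectors `ε₀, …, ε₃`.
-/

abbrev B : Type := MvPowerSeries (Fin 4) ℤ_[3]

/-- The ideal `(a₁b₁ - 3, a₂b₂ - 3)` of `ℤ₃[[a₁, b₁, a₂, b₂]]`, where `a₁, b₁, a₂, b₂`
are the four variables. -/
noncomputable abbrev relIdeal : Ideal B :=
  Ideal.span {MvPowerSeries.X 0 * MvPowerSeries.X 1 - 3,
    MvPowerSeries.X 2 * MvPowerSeries.X 3 - 3}

abbrev A : Type := B ⧸ relIdeal

noncomputable def a1 : A := Ideal.Quotient.mk relIdeal (MvPowerSeries.X 0)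

noncomputable def b1 : A := Ideal.Quotient.mk relIdeal (MvPowerSeries.X 1)

noncomputable def a2 : A := Ideal.Quotient.mk relIdeal (MvPowerSeries.X 2)

noncomputable def b2 : A := Ideal.Quotient.mk relIdeal (MvPowerSeries.X 3)

namespace MvPowerSeries

variable {σ R : Type*}

section CommSemiring

variable [CommSemiring R]

theorem coeff_single_one_mul [DecidableEq σ] (i : σ) (f g : MvPowerSeries σ R) :
    coeff (Finsupp.single i 1) (f * g) =
      constantCoeff f * coeff (Finsupp.single i 1) g +
        coeff (Finsupp.single i 1) f * constantCoeff g := by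
  rw [coeff_mul, Finsupp.antidiagonal_single]
  simp [Finset.Nat.antidiagonal_succ]

open TrivSqZeroExt in
/-- Reduction modulo the square of the ideal `(Xᵢ)`. -/
noncomputable def firstOrderJet : MvPowerSeries σ R →+* TrivSqZeroExt R (σ → R) where
  toFun f := inl (constantCoeff f) + inr fun i => coeff (Finsupp.single i 1) f
  map_one' := by
    classical
    ext <;> simp [coeff_one]
  map_mul' f g := by
    classical
    ext
    · simp
    · simp only [snd_mul]
      simp [coeff_single_one_mul, mul_comm]
  map_zero' := by ext <;> simp
  map_add' f g := by ext <;> simp [add_add_add_comm]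

@[simp]
theorem fst_firstOrderJet (f : MvPowerSeries σ R) : (firstOrderJet f).fst = constantCoeff f := by
  simp [firstOrderJet]

@[simp]
theorem snd_firstOrderJet (f : MvPowerSeries σ R) (i : σ) :
    (firstOrderJet f).snd i = coeff (Finsupp.single i 1) f := by
  simp [firstOrderJet]

theorem firstOrderJet_X [DecidableEq σ] (i : σ) :
    firstOrderJet (X i : MvPowerSeries σ R) = .inr (Pi.single i 1) := by
  ext j
  · simp
  · simp [coeff_X, Pi.single_apply, Finsupp.single_left_inj, eq_comm]

end CommSemiring

theorem sub_C_constantCoeff_mem_span_X [CommRing R] [Finite σ] (f : MvPowerSeries σ R) :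
    f - C (constantCoeff f) ∈ Ideal.span (Set.range X) := by
  classical
  have := Fintype.ofFinite σ
  -- enlarging `s` by `a` changes `restrict s` by a multiple of `X a`
  let restrict (s : Finset σ) : MvPowerSeries σ R :=
    fun m => if ∀ i ∈ s, m i = 0 then coeff m f else 0
  have coeff_restrict (s : Finset σ) (m : σ →₀ ℕ) :
      coeff m (restrict s) = if ∀ i ∈ s, m i = 0 then coeff m f else 0 := rfl
  suffices ∀ s, f - restrict s ∈ Ideal.span (Set.range X) by
    convert this Finset.univ using 2
    ext m
    by_cases hm : m = 0
    · simp [hm, coeff_restrict]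
    · have : ¬∀ i, m i = 0 := fun h => hm (Finsupp.ext h)
      simp [coeff_restrict, coeff_C, hm, this]
  intro s
  induction s using Finset.induction_on with
  | empty => simp [restrict, coeff_apply]
  | insert a s _ ih =>
    obtain ⟨q, hq⟩ : X a ∣ restrict s - restrict (insert a s) := by
      rw [X_dvd_iff]
      intro m hm
      simp [coeff_restrict, hm]
    rw [← sub_add_sub_cancel f (restrict s), hq]
    exact add_mem ih (Ideal.mul_mem_right _ _ (Ideal.subset_span ⟨a, rfl⟩))

end MvPowerSeries

theorem TrivSqZeroExt.natCast_self_eq_zero (p : ℕ) (M : Type*) [AddMonoid M] :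
    (p : TrivSqZeroExt (ZMod p) M) = 0 := by
  ext
  · exact (fst_natCast p).trans (ZMod.natCast_self p)
  · exact snd_natCast p

theorem IsLocalRing.linearIndependent_toCotangent {R : Type*} [CommRing R] [IsLocalRing R]
    {ι : Type*} [Fintype ι] (x : ι → maximalIdeal R)
    (h : ∀ d : ι → R, ∑ i, d i * x i ∈ maximalIdeal R ^ 2 → ∀ i, d i ∈ maximalIdeal R) :
    LinearIndependent (ResidueField R) fun i => (maximalIdeal R).toCotangent (x i) := by
  rw [Fintype.linearIndependent_iff]
  intro c hc i
  choose d hd using fun i => residue_surjective (c i)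
  have hsum : (maximalIdeal R).toCotangent (∑ i, d i • x i) = 0 := by
    rw [map_sum, ← hc]
    refine Finset.sum_congr rfl fun i _ => ?_
    rw [map_smul, ← hd i, ← ResidueField.algebraMap_eq, algebraMap_smul]
  rw [Ideal.toCotangent_eq_zero] at hsum
  rw [← hd i, residue_eq_zero_iff]
  exact h d (by simpa using hsum) i

open MvPowerSeries IsLocalRing TrivSqZeroExt

noncomputable def jetB : B →+* TrivSqZeroExt (ZMod 3) (Fin 4 → ZMod 3) :=
  firstOrderJet.comp (map PadicInt.toZMod)

theorem jetB_X (i : Fin 4) : jetB (X i) = inr (Pi.single i 1) := by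
  simp [jetB, firstOrderJet_X]

theorem relIdeal_le_ker_jetB : relIdeal ≤ RingHom.ker jetB := by
  have hgen (i j : Fin 4) : X i * X j - 3 ∈ RingHom.ker jetB := by
    rw [RingHom.mem_ker, map_sub, map_mul, map_ofNat,
      ← Nat.cast_ofNat (R := TrivSqZeroExt (ZMod 3) (Fin 4 → ZMod 3)), natCast_self_eq_zero,
      jetB_X, jetB_X, inr_mul_inr, sub_zero]
  rw [Ideal.span_le]
  rintro _ (rfl | rfl)
  exacts [hgen 0 1, hgen 2 3]

noncomputable def jetA : A →+* TrivSqZeroExt (ZMod 3) (Fin 4 → ZMod 3) :=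
  Ideal.Quotient.lift relIdeal jetB fun _ h => relIdeal_le_ker_jetB h

noncomputable def residueA : A →+* ZMod 3 :=
  (fstHom (ZMod 3) (ZMod 3) (Fin 4 → ZMod 3)).toRingHom.comp jetA

theorem jetA_X (i : Fin 4) : jetA (Ideal.Quotient.mk relIdeal (X i)) = inr (Pi.single i 1) :=
  jetB_X i

theorem residueA_mk (f : B) :
    residueA (Ideal.Quotient.mk relIdeal f) = PadicInt.toZMod (constantCoeff f) := by
  simp [residueA, jetA, jetB]

theorem residueA_X (i : Fin 4) : residueA (Ideal.Quotient.mk relIdeal (X i)) = 0 := by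
  simp [residueA_mk]

theorem maximalIdeal_eq_ker_residueA [IsLocalRing A] : maximalIdeal A = RingHom.ker residueA :=
  (eq_maximalIdeal (RingHom.ker_isMaximal_of_surjective _ (ZMod.ringHom_surjective residueA))).symm

theorem ker_residueA_le {I : Ideal A} (h3 : (3 : A) ∈ I)
    (hX : ∀ i, Ideal.Quotient.mk relIdeal (X i) ∈ I) : RingHom.ker residueA ≤ I := by
  intro x hx
  obtain ⟨f, rfl⟩ := Ideal.Quotient.mk_surjective x
  rw [RingHom.mem_ker, residueA_mk, ← RingHom.mem_ker, PadicInt.ker_toZMod,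
    PadicInt.maximalIdeal_eq_span_p, Ideal.mem_span_singleton] at hx
  obtain ⟨z, hz⟩ := hx
  rw [← sub_add_cancel f (C (constantCoeff f)), map_add]
  refine add_mem ?_ ?_
  · have : Ideal.span (Set.range X) ≤ I.comap (Ideal.Quotient.mk relIdeal) := by
      rw [Ideal.span_le]
      rintro _ ⟨i, rfl⟩
      exact hX i
    exact this (sub_C_constantCoeff_mem_span_X f)
  · rw [hz, map_mul, map_mul, map_natCast, map_natCast, Nat.cast_ofNat]
    exact I.mul_mem_right _ h3

theorem sq_ker_residueA_le_ker_jetA : RingHom.ker residueA ^ 2 ≤ RingHom.ker jetA := by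
  rw [pow_two, Ideal.mul_le]
  intro u hu v hv
  have hu' : (jetA u).fst = 0 := hu
  have hv' : (jetA v).fst = 0 := hv
  rw [RingHom.mem_ker, map_mul]
  ext <;> simp [snd_mul, hu', hv']

theorem mk_X_mem_maximalIdeal [IsLocalRing A] (i : Fin 4) :
    Ideal.Quotient.mk relIdeal (X i) ∈ maximalIdeal A :=
  maximalIdeal_eq_ker_residueA ▸ residueA_X i

theorem mem_maximalIdeal_of_sum_mul_X_mem_sq [IsLocalRing A] (d : Fin 4 → A)
    (hd : ∑ i, d i * Ideal.Quotient.mk relIdeal (X i) ∈ maximalIdeal A ^ 2) (j : Fin 4) :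
    d j ∈ maximalIdeal A := by
  rw [maximalIdeal_eq_ker_residueA] at hd ⊢
  have hjet := congrArg (fun t => t.snd j) (sq_ker_residueA_le_ker_jetA hd)
  simpa [snd_sum, snd_mul, jetA_X, residueA, Pi.single_apply] using hjet

theorem mk_X_mul_X_eq_three {i j : Fin 4} (h : X i * X j - 3 ∈ relIdeal) :
    Ideal.Quotient.mk relIdeal (X i) * Ideal.Quotient.mk relIdeal (X j) = 3 := by
  rw [← map_mul, ← map_ofNat (Ideal.Quotient.mk relIdeal) 3, Ideal.Quotient.mk_eq_mk_iff_sub_mem]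
  exact h

theorem a1_mul_b1 : a1 * b1 = 3 := mk_X_mul_X_eq_three (Ideal.subset_span (by simp))

theorem a2_mul_b2 : a2 * b2 = 3 := mk_X_mul_X_eq_three (Ideal.subset_span (by simp))

theorem maximalIdeal_mem_minimalPrimes_span [IsLocalRing A] :
    maximalIdeal A ∈ (Ideal.span {a1, b1, a2 + b2}).minimalPrimes := by
  refine ⟨⟨inferInstance, ?_⟩, fun P ⟨hP, hspan⟩ _ => ?_⟩
  · rw [Ideal.span_le]
    simp only [Set.insert_subset_iff, Set.singleton_subset_iff, SetLike.mem_coe]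
    exact ⟨mk_X_mem_maximalIdeal 0, mk_X_mem_maximalIdeal 1,
      add_mem (mk_X_mem_maximalIdeal 2) (mk_X_mem_maximalIdeal 3)⟩
  · have ha1 : a1 ∈ P := hspan (Ideal.subset_span (by simp))
    have hb1 : b1 ∈ P := hspan (Ideal.subset_span (by simp))
    have hab2 : a2 + b2 ∈ P := hspan (Ideal.subset_span (by simp))
    have h3 : (3 : A) ∈ P := a1_mul_b1 ▸ P.mul_mem_right b1 ha1
    have ha2b2 : a2 ∈ P ∧ b2 ∈ P := by
      rcases hP.mem_or_mem (a2_mul_b2 ▸ h3) with ha2 | hb2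
      · exact ⟨ha2, by simpa using P.sub_mem hab2 ha2⟩
      · exact ⟨by simpa using P.sub_mem hab2 hb2, hb2⟩
    rw [maximalIdeal_eq_ker_residueA]
    refine ker_residueA_le h3 fun i => ?_
    fin_cases i
    exacts [ha1, hb1, ha2b2.1, ha2b2.2]

/-- The local ring `A = ℤ₃[[a₁, b₁, a₂, b₂]] / (a₁b₁ - 3, a₂b₂ - 3)` is not a regular
local ring: it is not a Noetherian local ring whose Krull dimension equals the minimal
number of generators of its maximal ideal (the residue-field dimension of `m/m²`). -/
theorem A_not_regular :
    ¬ ∃ (_ : IsNoetherianRing A) (h : IsLocalRing A),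
      letI := h
      ringKrullDim A =
        Module.finrank (IsLocalRing.ResidueField A) (IsLocalRing.CotangentSpace A) := by
  rintro ⟨_, _, hreg⟩
  have hdim : ringKrullDim A ≤ 3 := by
    classical
    rw [← maximalIdeal_height_eq_ringKrullDim]
    have hheight := Ideal.height_le_card_of_mem_minimalPrimes_span_finset
      (s := {a1, b1, a2 + b2}) (by simpa using maximalIdeal_mem_minimalPrimes_span)
    have hcard : (({a1, b1, a2 + b2} : Finset A).card : ℕ∞) ≤ 3 := by
      exact_mod_cast Finset.card_le_three
    exact WithBot.coe_le_coe.mpr (hheight.trans hcard)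
  have hindep := linearIndependent_toCotangent
    (fun i => ⟨Ideal.Quotient.mk relIdeal (X i), mk_X_mem_maximalIdeal i⟩)
    mem_maximalIdeal_of_sum_mul_X_mem_sq
  have hrank : 4 ≤ Module.finrank (ResidueField A) (CotangentSpace A) := by
    simpa using hindep.fintype_card_le_finrank
  have : Module.finrank (ResidueField A) (CotangentSpace A) ≤ 3 := by
    exact_mod_cast hreg ▸ hdim
  omega
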